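/- arXiv:2009.04580 — 5 statements merged into one kernel-verified Lean document; each statement's English description precedes it below -/
import Mathlib

section
/- Assume f satisfies (f1) and (f2), let 0 < a < b < ∞, and let u be a positive solution of (R). Then (u'(r))² + 2F(u(r)) > 0 for every r ∈ [a,b). -/
/-!
Along a solution the energy `E(r) = u'(r)² + 2F(u(r))` satisfies `E' = -2(n-1)/r · u'²`, so it is
nonincreasing on `[a, b]`, and `E(b) = u'(b)² ≥ 0`. If `E(r) ≤ 0` for some `r < b`, then `E ≡ 0` on
`[r, b]`, which forces `u' ≡ 0` on `(r, b)`; but then `u` would be constant there, contradicting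
`u(b) = 0 < u` on `(a, b)`.
-/

open Set Filter MeasureTheory

/-- `F(s) = ∫₀ˢ f(t) dt`. -/
noncomputable def Fint (f : ℝ → ℝ) (s : ℝ) : ℝ := ∫ t in (0:ℝ)..s, f t

/-- Condition (f1): `f` is continuous on `[0,∞)`, continuously differentiable on `(0,∞)`,
and `f' ∈ L¹(0,1)`. -/
def CondF1 (f : ℝ → ℝ) : Prop :=
  ContinuousOn f (Ici 0) ∧ (∀ s ∈ Ioi (0:ℝ), DifferentiableAt ℝ f s) ∧
  ContinuousOn (deriv f) (Ioi 0) ∧ IntervalIntegrable (deriv f) volume 0 1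

/-- Condition (f2) in the case `β > B > 0`. -/
def CondF2B (f : ℝ → ℝ) (β B : ℝ) : Prop :=
  f 0 = 0 ∧ 0 < B ∧ B < β ∧ (∀ s, B < s → 0 < f s) ∧
  (∀ s ∈ Icc (0:ℝ) B, f s ≤ 0) ∧ (∃ ε > (0:ℝ), ∀ s ∈ Ioo (0:ℝ) ε, f s < 0) ∧
  Fint f β = 0

/-- Condition (f2): either `β = B = 0` and `f > 0` on `(0,∞)`, or `β > B > 0` with the
sign conditions and `F(β) = 0`. -/
def CondF2 (f : ℝ → ℝ) (β B : ℝ) : Prop :=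
  (β = 0 ∧ B = 0 ∧ f 0 = 0 ∧ ∀ s, 0 < s → 0 < f s) ∨ CondF2B f β B

/-- Condition (f3): the derivative of `s ↦ F(s)/f(s)` is `≥ (n-2)/(2n)` for every `s > β`. -/
def CondF3 (n : ℕ) (f : ℝ → ℝ) (β : ℝ) : Prop :=
  ∀ s, β < s → ∃ d, ((n : ℝ) - 2) / (2 * (n : ℝ)) ≤ d ∧
    HasDerivAt (fun t => Fint f t / f t) d s

/-- Condition (f4): superlinearity `f(s) ≤ f'(s)(s - B)` for `s > B`, with
`f(s) ≢ f'(s)(s - B)` on `[B, β]`. -/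
def CondF4 (f : ℝ → ℝ) (β B : ℝ) : Prop :=
  (∀ s, B < s → f s ≤ deriv f s * (s - B)) ∧
  ¬ (∀ s ∈ Icc B β, f s = deriv f s * (s - B))

/-- A positive solution of problem (R) on the annulus `a < |x| < b`:
`u` is continuous on `[a,b]`, differentiable up to the boundary with derivative `u'`
(one-sided at the endpoints), `u'` is continuous on `[a,b]`, `u` is twice continuously
differentiable on `(a,b)` where it satisfies `u'' + ((n-1)/r) u' + f(u) = 0`,
`u(a) = u(b) = 0` and `u > 0` on `(a,b)`. -/
def IsPosSolAnn (n : ℕ) (a b : ℝ) (f u u' : ℝ → ℝ) : Prop :=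
  ContinuousOn u (Icc a b) ∧
  (∀ r ∈ Icc a b, HasDerivWithinAt u (u' r) (Icc a b) r) ∧
  ContinuousOn u' (Icc a b) ∧
  (∀ r ∈ Ioo a b, HasDerivAt u (u' r) r) ∧
  (∀ r ∈ Ioo a b, HasDerivAt u' (-(((n : ℝ) - 1) / r * u' r + f (u r))) r) ∧
  u a = 0 ∧ u b = 0 ∧ (∀ r ∈ Ioo a b, 0 < u r)

/-- A positive solution of the exterior problem (R) with `b = ∞`:
`u` is continuous on `[a,∞)`, differentiable on `[a,∞)` with derivative `u'`
(one-sided at `a`), twice continuously differentiable on `(a,∞)` where it satisfies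
`u'' + ((n-1)/r) u' + f(u) = 0`, `u(a) = 0`, `u > 0` on `(a,∞)` and `u(r) → 0` as `r → ∞`. -/
def IsPosSolExt (n : ℕ) (a : ℝ) (f u u' : ℝ → ℝ) : Prop :=
  ContinuousOn u (Ici a) ∧
  (∀ r ∈ Ici a, HasDerivWithinAt u (u' r) (Ici a) r) ∧
  (∀ r ∈ Ioi a, HasDerivAt u (u' r) r) ∧
  (∀ r ∈ Ioi a, HasDerivAt u' (-(((n : ℝ) - 1) / r * u' r + f (u r))) r) ∧
  u a = 0 ∧ (∀ r ∈ Ioi a, 0 < u r) ∧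
  Tendsto u atTop (nhds 0)

/-- The Erbe–Tang functional
`P(s) = -2n (F(s)/f(s)) ρ(s)^{n-1} u'(ρ(s)) - ρ(s)^n (u'(ρ(s)))² - 2 ρ(s)^n F(s)`,
where `ρ` is an inverse branch of the solution `u` with derivative `u'`. -/
noncomputable def Pfun (n : ℕ) (f : ℝ → ℝ) (ρ u' : ℝ → ℝ) (s : ℝ) : ℝ :=
  -2 * (n : ℝ) * (Fint f s / f s) * (ρ s) ^ (n - 1) * u' (ρ s)
    - (ρ s) ^ n * (u' (ρ s)) ^ 2 - 2 * (ρ s) ^ n * Fint f s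

lemma hasDerivAt_Fint {f : ℝ → ℝ} (hf : ContinuousOn f (Ici 0)) {x : ℝ} (hx : 0 < x) :
    HasDerivAt (Fint f) (f x) x := by
  have hmem : Ici (0 : ℝ) ∈ nhds x := Ici_mem_nhds hx
  refine intervalIntegral.integral_hasDerivAt_right ?_
    ⟨Ici 0, hmem, hf.aestronglyMeasurable measurableSet_Ici⟩ ((hf x hx.le).continuousAt hmem)
  exact (hf.mono (by simp [uIcc_of_le hx.le, Icc_subset_Ici_self])).intervalIntegrable

lemma continuousOn_Fint {f : ℝ → ℝ} (hf : ContinuousOn f (Ici 0)) :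
    ContinuousOn (Fint f) (Ici 0) := by
  intro x hx
  have hx1 : (0 : ℝ) ≤ x + 1 := by linarith [mem_Ici.1 hx]
  have hcont : ContinuousOn (Fint f) (Icc 0 (x + 1)) := by
    have hint : IntervalIntegrable f volume 0 (x + 1) :=
      (hf.mono (by simp [uIcc_of_le hx1, Icc_subset_Ici_self])).intervalIntegrable
    have := intervalIntegral.continuousOn_primitive_interval' hint left_mem_uIcc
    rwa [uIcc_of_le hx1] at this
  refine (hcont x ⟨hx, by linarith⟩).mono_of_mem_nhdsWithin ?_
  rw [← Ici_inter_Iic]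
  exact inter_mem_nhdsWithin _ (Iic_mem_nhds (by linarith))

noncomputable def energy (f u u' : ℝ → ℝ) (r : ℝ) : ℝ := u' r ^ 2 + 2 * Fint f (u r)

namespace IsPosSolAnn

variable {n : ℕ} {a b : ℝ} {f u u' : ℝ → ℝ}

lemma nonneg (hu : IsPosSolAnn n a b f u u') {r : ℝ} (hr : r ∈ Icc a b) : 0 ≤ u r := by
  obtain ⟨-, -, -, -, -, hua, hub, hpos⟩ := hu
  rcases hr.1.eq_or_lt with rfl | har
  · exact hua.ge
  rcases hr.2.eq_or_lt with rfl | hrb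
  · exact hub.ge
  exact (hpos r ⟨har, hrb⟩).le

lemma hasDerivAt_energy (hf : ContinuousOn f (Ici 0)) (hu : IsPosSolAnn n a b f u u')
    {t : ℝ} (ht : t ∈ Ioo a b) :
    HasDerivAt (energy f u u') (-(2 * ((n : ℝ) - 1) / t * u' t ^ 2)) t := by
  obtain ⟨-, -, -, hu', hu'', -, -, hpos⟩ := hu
  have hFu := (hasDerivAt_Fint hf (hpos t ht)).comp t (hu' t ht)
  have h : HasDerivAt (fun s => u' s ^ 2 + 2 * Fint f (u s)) _ t :=
    ((hu'' t ht).pow 2).add (hFu.const_mul 2)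
  exact h.congr_deriv (by push_cast; ring)

lemma continuousOn_energy (hf : ContinuousOn f (Ici 0)) (hu : IsPosSolAnn n a b f u u') :
    ContinuousOn (energy f u u') (Icc a b) :=
  (hu.2.2.1.pow 2).add <| continuousOn_const.mul <|
    (continuousOn_Fint hf).comp hu.1 fun _ hr => hu.nonneg hr

lemma energy_right (hu : IsPosSolAnn n a b f u u') : energy f u u' b = u' b ^ 2 := by
  obtain ⟨-, -, -, -, -, -, hub, -⟩ := hu
  simp [energy, hub, Fint]

lemma antitoneOn_energy (hn : 1 ≤ n) (ha : 0 < a) (hf : ContinuousOn f (Ici 0))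
    (hu : IsPosSolAnn n a b f u u') : AntitoneOn (energy f u u') (Icc a b) := by
  have hn' : (1 : ℝ) ≤ n := by exact_mod_cast hn
  refine antitoneOn_of_hasDerivWithinAt_nonpos (f' := fun t => -(2 * ((n : ℝ) - 1) / t * u' t ^ 2))
    (convex_Icc a b) (hu.continuousOn_energy hf)
    (fun t ht => ?_) (fun t ht => ?_)
  · rw [interior_Icc] at ht
    exact (hu.hasDerivAt_energy hf ht).hasDerivWithinAt
  · rw [interior_Icc] at ht
    have : 0 ≤ 2 * ((n : ℝ) - 1) / t * u' t ^ 2 :=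
      mul_nonneg (div_nonneg (by linarith) (ha.trans ht.1).le) (sq_nonneg _)
    linarith

lemma deriv_eq_zero_of_energy_eqOn_zero (hn : 2 ≤ n) (ha : 0 < a) (hf : ContinuousOn f (Ici 0))
    (hu : IsPosSolAnn n a b f u u') {r : ℝ} (har : a ≤ r) (hE : EqOn (energy f u u') 0 (Ioo r b))
    {t : ℝ} (ht : t ∈ Ioo r b) : u' t = 0 := by
  have hE' : HasDerivAt (energy f u u') 0 t :=
    (hasDerivAt_const t 0).congr_of_eventuallyEq (eventually_of_mem (isOpen_Ioo.mem_nhds ht) hE)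
  have hcoef : 2 * ((n : ℝ) - 1) / t ≠ 0 := by
    have : (2 : ℝ) ≤ n := by exact_mod_cast hn
    exact div_ne_zero (by linarith) (ha.trans_le har |>.trans ht.1).ne'
  have := (hu.hasDerivAt_energy hf ⟨har.trans_lt ht.1, ht.2⟩).unique hE'
  simpa [hcoef] using this

lemma not_eqOn_deriv_zero (hu : IsPosSolAnn n a b f u u') {r : ℝ} (har : a ≤ r) (hrb : r < b) :
    ¬ EqOn u' 0 (Ioo r b) := by
  intro hzero
  obtain ⟨huc, -, -, hderiv, -, -, hub, hpos⟩ := hu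
  obtain ⟨t, hrt, htb⟩ := exists_between hrb
  have hta : a < t := har.trans_lt hrt
  obtain ⟨c, hc, hslope⟩ := exists_hasDerivAt_eq_slope u u' htb
    (huc.mono (Icc_subset_Icc hta.le le_rfl)) fun x hx => hderiv x ⟨hta.trans hx.1, hx.2⟩
  have hut : u t = 0 := by
    rw [hzero ⟨hrt.trans hc.1, hc.2⟩, Pi.zero_apply, hub, eq_comm, div_eq_zero_iff, zero_sub,
      neg_eq_zero] at hslope
    exact hslope.resolve_right (sub_pos.2 htb).ne'
  exact (hpos t ⟨hta, htb⟩).ne' hut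

lemma energy_pos (hn : 2 ≤ n) (ha : 0 < a) (hf : ContinuousOn f (Ici 0))
    (hu : IsPosSolAnn n a b f u u') {r : ℝ} (hr : r ∈ Ico a b) : 0 < energy f u u' r := by
  by_contra! hEr
  have hanti := hu.antitoneOn_energy (by omega) ha hf
  have hrI : r ∈ Icc a b := Ico_subset_Icc_self hr
  have hbI : b ∈ Icc a b := right_mem_Icc.2 (hr.1.trans hr.2.le)
  have hEb : 0 ≤ energy f u u' b := hu.energy_right ▸ sq_nonneg _
  have hE : EqOn (energy f u u') 0 (Ioo r b) := fun t ht => by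
    have htI : t ∈ Icc a b := ⟨hr.1.trans ht.1.le, ht.2.le⟩
    have := hanti hrI htI ht.1.le
    have := hanti htI hbI ht.2.le
    simp only [Pi.zero_apply]
    linarith
  exact hu.not_eqOn_deriv_zero hr.1 hr.2 fun t ht =>
    hu.deriv_eq_zero_of_energy_eqOn_zero hn ha hf hr.1 hE ht

end IsPosSolAnn

theorem energy_positive_general
    (n : ℕ) (hn : 2 ≤ n) (f : ℝ → ℝ)
    (hf1 : CondF1 f)
    (a b : ℝ) (ha : 0 < a)
    (u u' : ℝ → ℝ) (hu : IsPosSolAnn n a b f u u') :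
    ∀ r ∈ Ico a b, 0 < (u' r) ^ 2 + 2 * Fint f (u r) :=
  fun _ hr => hu.energy_pos hn ha hf1.1 hr

/-- Proposition 2.1 (i): under (f1), (f2), a positive solution `u` of (R) satisfies
`(u'(r))² + 2F(u(r)) > 0` for every `r ∈ [a,b)`. -/
theorem energy_positive
    (n : ℕ) (hn : 2 ≤ n) (f : ℝ → ℝ) (β B : ℝ)
    (hf1 : CondF1 f) (hf2 : CondF2 f β B)
    (a b : ℝ) (ha : 0 < a) (hab : a < b)
    (u u' : ℝ → ℝ) (hu : IsPosSolAnn n a b f u u') :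
    ∀ r ∈ Ico a b, 0 < (u' r) ^ 2 + 2 * Fint f (u r) :=
  energy_positive_general n hn f hf1 a b ha u u' hu
end

section
/- Assume f satisfies (f1) and (f2) with B > 0, and let u be a positive solution of the exterior problem (R) with b = ∞. Then r^{n−1}·u'(r) converges as r → ∞ to some limit L with L ∈ (−∞, 0]. -/
open Set Filter MeasureTheory

open Topology

/-!
The flux `g(r) = r^{n-1} u'(r)` satisfies `g' = -r^{n-1} f(u)`. Since `u → 0` and `f ≤ 0` on
`[0, B]`, `g` is eventually nondecreasing. Since `u > 0` tends to `0`, it must decrease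
somewhere beyond every point, so `g` takes negative values arbitrarily far out and hence, being
nondecreasing, is negative. A nondecreasing function bounded above by `0` converges to a limit `≤ 0`.
-/

lemma hasDerivAt_pow_mul_of_radial {n : ℕ} (hn : 1 ≤ n) {u' : ℝ → ℝ} {r c : ℝ} (hr : r ≠ 0)
    (h : HasDerivAt u' (-(((n : ℝ) - 1) / r * u' r + c)) r) :
    HasDerivAt (fun s => s ^ (n - 1) * u' s) (-(r ^ (n - 1) * c)) r := by
  obtain ⟨m, rfl⟩ : ∃ m, n = m + 1 := ⟨n - 1, by omega⟩
  refine ((hasDerivAt_pow m r).mul h).congr_deriv ?_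
  cases m <;> · push_cast; field_simp; ring

lemma exists_deriv_neg_of_tendsto_zero {u u' : ℝ → ℝ} {r₀ : ℝ} (hc : ContinuousOn u (Ici r₀))
    (hd : ∀ r ∈ Ioi r₀, HasDerivAt u (u' r) r) (hpos : 0 < u r₀)
    (hlim : Tendsto u atTop (𝓝 0)) : ∃ r > r₀, u' r < 0 := by
  by_contra! h
  have hmono : MonotoneOn u (Ici r₀) :=
    monotoneOn_of_hasDerivWithinAt_nonneg (convex_Ici r₀) hc
      (fun r hr => (hd r (by rwa [interior_Ici] at hr)).hasDerivWithinAt)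
      (fun r hr => h r (by rwa [interior_Ici] at hr))
  have : u r₀ ≤ 0 := ge_of_tendsto hlim <| by
    filter_upwards [eventually_ge_atTop r₀] with r hr
    exact hmono self_mem_Ici hr hr
  linarith

lemma MonotoneOn.exists_tendsto_atTop_of_le {g : ℝ → ℝ} {R C : ℝ} (hg : MonotoneOn g (Ici R))
    (hC : ∀ r ∈ Ici R, g r ≤ C) : ∃ L ≤ C, Tendsto g atTop (𝓝 L) := by
  set G : ℝ → ℝ := fun r => g (max r R)
  have hGmono : Monotone G := fun x y hxy =>
    hg (mem_Ici.2 (le_max_right x R)) (mem_Ici.2 (le_max_right y R)) (max_le_max hxy le_rfl)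
  have hGC : ∀ r, G r ≤ C := fun r => hC _ (mem_Ici.2 (le_max_right r R))
  refine ⟨⨆ r, G r, ciSup_le hGC, ?_⟩
  refine (tendsto_atTop_ciSup hGmono ⟨C, forall_mem_range.2 hGC⟩).congr' ?_
  filter_upwards [eventually_ge_atTop R] with r hr
  simp only [G, max_eq_left hr]

theorem rpow_times_deriv_tendsto_general
    (n : ℕ) (hn : 2 ≤ n) (f : ℝ → ℝ) (β B : ℝ)
    (hf2 : CondF2B f β B)
    (a : ℝ) (ha : 0 < a)
    (u u' : ℝ → ℝ) (hu : IsPosSolExt n a f u u') :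
    ∃ L : ℝ, L ≤ 0 ∧ Tendsto (fun r : ℝ => r ^ (n - 1) * u' r) atTop (nhds L) := by
  obtain ⟨hu_cont, -, hu_d, hu_d2, -, hu_pos, hu_lim⟩ := hu
  obtain ⟨-, hB, -, -, hf_nonpos, -, -⟩ := hf2
  set g : ℝ → ℝ := fun r => r ^ (n - 1) * u' r
  have hg : ∀ r ∈ Ioi a, HasDerivAt g (-(r ^ (n - 1) * f (u r))) r := fun r hr =>
    hasDerivAt_pow_mul_of_radial (by omega) (ha.trans hr).ne' (hu_d2 r hr)
  obtain ⟨R, hR⟩ := eventually_atTop.1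
    ((eventually_gt_atTop a).and (hu_lim.eventually (gt_mem_nhds hB)))
  have hRa : ∀ r ∈ Ici R, a < r := fun r hr => (hR r hr).1
  have hg_mono : MonotoneOn g (Ici R) :=
    monotoneOn_of_hasDerivWithinAt_nonneg (convex_Ici R)
      (fun r hr => (hg r (hRa r hr)).continuousAt.continuousWithinAt)
      (fun r hr => (hg r (hRa r (interior_subset hr))).hasDerivWithinAt)
      (fun r hr => by
        have hr := hR r (interior_subset hr)
        exact neg_nonneg.2 (mul_nonpos_of_nonneg_of_nonpos (pow_pos (ha.trans hr.1) _).le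
          (hf_nonpos _ ⟨(hu_pos r hr.1).le, hr.2.le⟩)))
  have hg_nonpos : ∀ r ∈ Ici R, g r ≤ 0 := by
    intro r₀ hr₀
    have ha_r₀ := hRa r₀ hr₀
    obtain ⟨r, hr, hu'r⟩ := exists_deriv_neg_of_tendsto_zero
      (hu_cont.mono (Ici_subset_Ici.2 ha_r₀.le))
      (fun r hr => hu_d r (ha_r₀.trans hr)) (hu_pos r₀ ha_r₀) hu_lim
    calc g r₀ ≤ g r := hg_mono hr₀ (mem_Ici.2 (hr₀.trans hr.le)) hr.le
      _ ≤ 0 := mul_nonpos_of_nonneg_of_nonpos (pow_pos (ha.trans (ha_r₀.trans hr)) _).le hu'r.le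
  exact hg_mono.exists_tendsto_atTop_of_le hg_nonpos

/-- Proposition 2.2 (i): under (f1), (f2) with `B > 0`, for a positive solution `u` of the
exterior problem, `r^{n-1} u'(r)` converges as `r → ∞` to some `L ∈ (-∞, 0]`. -/
theorem rpow_times_deriv_tendsto
    (n : ℕ) (hn : 2 ≤ n) (f : ℝ → ℝ) (β B : ℝ)
    (hf1 : CondF1 f) (hf2 : CondF2B f β B)
    (a : ℝ) (ha : 0 < a)
    (u u' : ℝ → ℝ) (hu : IsPosSolExt n a f u u') :
    ∃ L : ℝ, L ≤ 0 ∧ Tendsto (fun r : ℝ => r ^ (n - 1) * u' r) atTop (nhds L) :=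
  rpow_times_deriv_tendsto_general n hn f β B hf2 a ha u u' hu
end

section
/- Assume f satisfies (f1) and (f2) with B > 0, and let u be a positive solution of the exterior problem (R) with b = ∞. Then r·u'(r) → 0 as r → ∞. -/
open Set Filter MeasureTheory

/-
The flux `g(r) = r^{n-1} u'(r)` satisfies `g' = -r^{n-1} f(u)`. Since `u → 0` and `f ≤ 0` on
`[0, B]`, `g` is eventually nondecreasing; it is also eventually `≤ 0`, for otherwise `u` would
be eventually increasing, which is incompatible with `u > 0` and `u → 0`. Hence `g → L ≤ 0`,
and `r u' = g / r^{n-2}`. For `n ≥ 3` this tends to `0` because `g` is bounded; for `n = 2` a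
negative limit `L` would give `u(r) ≲ L log r → -∞`, so `L = 0`.
-/

open Topology

lemma hasDerivAt_pow_mul_of_radial_ode {n : ℕ} (hn : 1 ≤ n) {u' : ℝ → ℝ} {r c : ℝ} (hr : r ≠ 0)
    (h : HasDerivAt u' (-(((n : ℝ) - 1) / r * u' r + c)) r) :
    HasDerivAt (fun r => r ^ (n - 1) * u' r) (-(r ^ (n - 1) * c)) r := by
  refine ((hasDerivAt_pow (n - 1) r).mul h).congr_deriv ?_
  obtain ⟨m, rfl⟩ := Nat.exists_eq_add_of_le hn
  rcases m with _ | m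
  · simp
  · simp only [Nat.add_sub_cancel_left, Nat.add_sub_cancel, Nat.cast_add, Nat.cast_one]
    field_simp
    ring

lemma monotoneOn_Ici_of_hasDerivAt_nonneg {g g' : ℝ → ℝ} {R : ℝ}
    (hd : ∀ r ≥ R, HasDerivAt g (g' r) r) (hnn : ∀ r ≥ R, 0 ≤ g' r) :
    MonotoneOn g (Ici R) := by
  refine monotoneOn_of_hasDerivWithinAt_nonneg (f' := g') (convex_Ici R)
    (fun r hr => (hd r hr).continuousAt.continuousWithinAt) (fun r hr => ?_) (fun r hr => ?_)
  · rw [interior_Ici] at hr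
    exact (hd r (le_of_lt hr)).hasDerivWithinAt
  · rw [interior_Ici] at hr
    exact hnn r (le_of_lt hr)

lemma le_of_tendsto_of_hasDerivAt_nonneg {u u' : ℝ → ℝ} {R l : ℝ}
    (hd : ∀ r ≥ R, HasDerivAt u (u' r) r) (hnn : ∀ r ≥ R, 0 ≤ u' r)
    (hl : Tendsto u atTop (𝓝 l)) : u R ≤ l := by
  have hmono := monotoneOn_Ici_of_hasDerivAt_nonneg hd hnn
  refine ge_of_tendsto hl ?_
  filter_upwards [eventually_ge_atTop R] with r hr
  exact hmono self_mem_Ici hr hr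

lemma MonotoneOn.exists_tendsto_atTop {g : ℝ → ℝ} {R : ℝ} (hg : MonotoneOn g (Ici R))
    (hbdd : BddAbove (g '' Ici R)) : ∃ L, Tendsto g atTop (𝓝 L) := by
  have hmono : Monotone fun r => g (max r R) := fun x y hxy =>
    hg (le_max_right x R) (le_max_right y R) (max_le_max hxy le_rfl)
  have hbdd' : BddAbove (range fun r => g (max r R)) :=
    hbdd.mono (range_subset_iff.2 fun r => mem_image_of_mem g (le_max_right r R))
  refine ⟨_, (tendsto_atTop_ciSup hmono hbdd').congr' ?_⟩
  filter_upwards [eventually_ge_atTop R] with r hr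
  rw [max_eq_left hr]

-- `r u' ≤ c < 0` integrates to `u(r) ≤ u(R) + c (log r - log R)`.
lemma tendsto_atBot_of_mul_deriv_le_neg {u u' : ℝ → ℝ} {c : ℝ} (hc : c < 0)
    (hd : ∀ᶠ r in atTop, HasDerivAt u (u' r) r) (hle : ∀ᶠ r in atTop, r * u' r ≤ c) :
    Tendsto u atTop atBot := by
  obtain ⟨R, hR⟩ := eventually_atTop.1 ((hd.and hle).and (eventually_gt_atTop 0))
  have hψ : MonotoneOn (fun r => c * Real.log r - u r) (Ici R) := by
    refine monotoneOn_Ici_of_hasDerivAt_nonneg (g' := fun r => c * r⁻¹ - u' r)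
      (fun r hr => ((Real.hasDerivAt_log (hR r hr).2.ne').const_mul c).sub (hR r hr).1.1)
      (fun r hr => ?_)
    obtain ⟨⟨-, hru⟩, hr⟩ := hR r hr
    rw [sub_nonneg, ← div_eq_mul_inv, le_div_iff₀ hr, mul_comm]
    exact hru
  have hlog : Tendsto (fun r => u R - c * Real.log R + c * Real.log r) atTop atBot :=
    tendsto_atBot_add_const_left _ _ (Real.tendsto_log_atTop.const_mul_atTop_of_neg hc)
  refine tendsto_atBot_mono' atTop ?_ hlog
  filter_upwards [eventually_ge_atTop R] with r hr
  have := hψ self_mem_Ici hr hr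
  simp only at this
  linarith

lemma nonneg_of_tendsto_mul_deriv {u u' : ℝ → ℝ} {L l : ℝ}
    (hd : ∀ᶠ r in atTop, HasDerivAt u (u' r) r)
    (hL : Tendsto (fun r => r * u' r) atTop (𝓝 L)) (hu : Tendsto u atTop (𝓝 l)) : 0 ≤ L := by
  by_contra! hL_neg
  refine not_tendsto_nhds_of_tendsto_atBot ?_ l hu
  exact tendsto_atBot_of_mul_deriv_le_neg (by linarith : L / 2 < 0) hd
    (hL.eventually (ge_mem_nhds (by linarith : L < L / 2)))

lemma mul_deriv_nonpos_of_monotoneOn {w u u' : ℝ → ℝ} {R l : ℝ} (hw : ∀ r ≥ R, 0 < w r)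
    (hmono : MonotoneOn (fun r => w r * u' r) (Ici R)) (hd : ∀ r ≥ R, HasDerivAt u (u' r) r)
    (hu : Tendsto u atTop (𝓝 l)) (hlt : ∀ r ≥ R, l < u r) (r : ℝ) (hr : R ≤ r) :
    w r * u' r ≤ 0 := by
  by_contra! hpos
  have hu'_nonneg : ∀ s ≥ r, 0 ≤ u' s := fun s hs =>
    (pos_of_mul_pos_right (hpos.trans_le (hmono hr (hr.trans hs) hs))
      (hw s (hr.trans hs)).le).le
  have := le_of_tendsto_of_hasDerivAt_nonneg (fun s hs => hd s (hr.trans hs)) hu'_nonneg hu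
  linarith [hlt r hr]

theorem r_times_deriv_tendsto_zero_general
    (n : ℕ) (hn : 2 ≤ n) (f : ℝ → ℝ) (β B : ℝ)
    (hf2 : CondF2B f β B)
    (a : ℝ)
    (u u' : ℝ → ℝ) (hu : IsPosSolExt n a f u u') :
    Tendsto (fun r : ℝ => r * u' r) atTop (nhds 0) := by
  obtain ⟨-, -, hu_deriv, hu'_deriv, -, hu_pos, hu_lim⟩ := hu
  obtain ⟨-, hB, -, -, hf_nonpos, -, -⟩ := hf2
  set g : ℝ → ℝ := fun r => r ^ (n - 1) * u' r with hg
  obtain ⟨R, hR⟩ := eventually_atTop.1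
    ((eventually_gt_atTop (max a 0)).and (hu_lim.eventually (gt_mem_nhds hB)))
  have hRa : ∀ r ≥ R, a < r ∧ 0 < r := fun r hr => max_lt_iff.1 (hR r hr).1
  have hg_mono : MonotoneOn g (Ici R) := by
    refine monotoneOn_Ici_of_hasDerivAt_nonneg (fun r hr => hasDerivAt_pow_mul_of_radial_ode
      (by omega) (hRa r hr).2.ne' (hu'_deriv r (hRa r hr).1)) (fun r hr => ?_)
    have : f (u r) ≤ 0 := hf_nonpos _ ⟨(hu_pos r (hRa r hr).1).le, (hR r hr).2.le⟩
    nlinarith [pow_pos (hRa r hr).2 (n - 1)]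
  have hg_nonpos : ∀ r ≥ R, g r ≤ 0 :=
    mul_deriv_nonpos_of_monotoneOn (w := fun r => r ^ (n - 1))
      (fun r hr => pow_pos (hRa r hr).2 _) hg_mono (fun r hr => hu_deriv r (hRa r hr).1) hu_lim
      (fun r hr => hu_pos r (hRa r hr).1)
  obtain ⟨L, hL⟩ := hg_mono.exists_tendsto_atTop ⟨0, forall_mem_image.2 hg_nonpos⟩
  have hL_nonpos : L ≤ 0 := le_of_tendsto hL (eventually_atTop.2 ⟨R, hg_nonpos⟩)
  have hdiv : Tendsto (fun r => g r / r ^ (n - 2)) atTop (𝓝 0) := by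
    rcases hn.eq_or_lt with rfl | hn3
    · obtain rfl : L = 0 := hL_nonpos.antisymm <| nonneg_of_tendsto_mul_deriv
        (eventually_atTop.2 ⟨R, fun r hr => hu_deriv r (hRa r hr).1⟩) (by simpa [hg] using hL)
        hu_lim
      simpa using hL
    · exact hL.div_atTop (tendsto_pow_atTop (by omega))
  refine hdiv.congr' ?_
  filter_upwards [eventually_gt_atTop 0] with r hr
  simp only [hg, show n - 1 = n - 2 + 1 by omega, pow_succ]
  field_simp

/-- Proposition 2.2 (ii): under (f1), (f2) with `B > 0`, for a positive solution `u` of the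
exterior problem, `r·u'(r) → 0` as `r → ∞`. -/
theorem r_times_deriv_tendsto_zero
    (n : ℕ) (hn : 2 ≤ n) (f : ℝ → ℝ) (β B : ℝ)
    (hf1 : CondF1 f) (hf2 : CondF2B f β B)
    (a : ℝ) (ha : 0 < a)
    (u u' : ℝ → ℝ) (hu : IsPosSolExt n a f u u') :
    Tendsto (fun r : ℝ => r * u' r) atTop (nhds 0) :=
  r_times_deriv_tendsto_zero_general n hn f β B hf2 a u u' hu
end

section
/- Let n ≥ 2 be an integer and let p, q be real numbers with p > 1 and 0 < q < p. Set f(s) = s^p + s^q, so f'(s) = p·s^{p−1} + q·s^{q−1} and F(s) = s^{p+1}/(p+1) + s^{q+1}/(q+1). If either (a) p ≤ q + 1 and (n−2)p ≤ n + 2, or (b) p > q + 1 and (p+q+1)²/(2(p+1)(q+1)) ≤ (n+2)/n, then F(s)·f'(s)/(f(s))² ≤ (n+2)/(2n) for all s > 0. -/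
/-- Key quadratic inequality. -/
lemma g_le_bound_key (p q N a b : ℝ) (hp : 1 < p) (hq : 0 < q) (hqp : q < p)
    (hN : 2 ≤ N) (ha : 0 < a) (hb : 0 < b)
    (hcond :
      (p ≤ q + 1 ∧ (N - 2) * p ≤ N + 2) ∨
      (q + 1 < p ∧ (p + q + 1) ^ 2 / (2 * (p + 1) * (q + 1)) ≤ (N + 2) / N)) :
    (a / (p + 1) + b / (q + 1)) * (p * a + q * b) ≤ (N + 2) / (2 * N) * (a + b) ^ 2 := by
  have hp1 : (0:ℝ) < p + 1 := by linarith
  have hq1 : (0:ℝ) < q + 1 := by linarith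
  have hN0 : (0:ℝ) < N := by linarith
  rw [show (N + 2) / (2 * N) * (a + b) ^ 2 = (N + 2) * (a + b) ^ 2 / (2 * N) from by ring,
    div_add_div _ _ (ne_of_gt hp1) (ne_of_gt hq1), div_mul_eq_mul_div,
    div_le_div_iff₀ (by positivity) (by positivity)]
  -- goal: (a*(q+1)+b*(p+1)) * (p*a+q*b) * (2*N) ≤ (N+2)*(a+b)^2 * ((p+1)*(q+1))
  rcases hcond with ⟨h1, h2⟩ | ⟨h1, h2⟩
  · -- case (a): coefficientwise
    have hq2 : (N - 2) * q ≤ N + 2 := by nlinarith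
    have hcross : (p - q) * (p - q - 1) ≤ 0 := by nlinarith
    nlinarith [mul_pos ha hb, sq_nonneg a, sq_nonneg b, mul_pos (mul_pos ha hb) hN0,
      mul_nonneg (mul_nonneg (sub_nonneg.2 h2) hq1.le) (sq_nonneg a),
      mul_nonneg (mul_nonneg (sub_nonneg.2 hq2) hp1.le) (sq_nonneg b),
      mul_nonneg (mul_nonneg (mul_nonneg (sub_nonneg.2 h2) hq1.le) ha.le) hb.le,
      mul_nonneg (mul_nonneg (mul_nonneg (neg_nonneg.2 hcross) hN0.le) ha.le) hb.le]
  · -- case (b): discriminant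
    have h2' : (p + q + 1) ^ 2 * N ≤ (N + 2) * (2 * (p + 1) * (q + 1)) := by
      rw [div_le_div_iff₀ (by positivity) hN0] at h2; linarith
    set X : ℝ := (N + 2) * (p + 1) * (q + 1) - 2 * N * p * (q + 1) with hX
    set Y : ℝ := (N + 2) * (p + 1) * (q + 1) - 2 * N * q * (p + 1) with hY
    set Z : ℝ := 2 * (N + 2) * (p + 1) * (q + 1) - 2 * N * (p ^ 2 + p + q ^ 2 + q) with hZ
    have hXpos : 0 < X := by nlinarith [sq_nonneg (p - q - 1)]
    have hs2 : 0 ≤ (N + 2) * (2 * (p + 1) * (q + 1)) - (p + q + 1) ^ 2 * N := by linarith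
    have hdisc : Z ^ 2 ≤ 4 * X * Y := by
      have hid : 4 * X * Y - Z ^ 2 =
          4 * N * (p - q) ^ 2 * ((N + 2) * (2 * (p + 1) * (q + 1)) - (p + q + 1) ^ 2 * N) := by
        rw [hX, hY, hZ]; ring
      nlinarith [mul_nonneg (mul_nonneg hN0.le (sq_nonneg (p - q))) hs2, hid]
    have hquad : 0 ≤ X * a ^ 2 + Z * (a * b) + Y * b ^ 2 := by
      nlinarith [sq_nonneg (2 * X * a + Z * b), sq_nonneg b, mul_pos ha hb,
        mul_nonneg (sub_nonneg.2 hdisc) (sq_nonneg b)]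
    have hid2 : (N + 2) * (a + b) ^ 2 * ((p + 1) * (q + 1)) -
        (a * (q + 1) + (p + 1) * b) * (p * a + q * b) * (2 * N) =
        X * a ^ 2 + Z * (a * b) + Y * b ^ 2 := by
      rw [hX, hY, hZ]; ring
    linarith [hquad]

/-- For `f(s) = s^p + s^q` with `p > 1` and `0 < q < p`, if either
(a) `p ≤ q + 1` and `(n-2)p ≤ n + 2`, or
(b) `p > q + 1` and `(p+q+1)²/(2(p+1)(q+1)) ≤ (n+2)/n`,
then `F(s) f'(s) / f(s)² ≤ (n+2)/(2n)` for all `s > 0`. -/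
theorem g_le_bound (n : ℕ) (hn : 2 ≤ n) (p q : ℝ) (hp : 1 < p) (hq : 0 < q) (hqp : q < p)
    (hcond :
      (p ≤ q + 1 ∧ ((n : ℝ) - 2) * p ≤ (n : ℝ) + 2) ∨
      (q + 1 < p ∧ (p + q + 1) ^ 2 / (2 * (p + 1) * (q + 1)) ≤ ((n : ℝ) + 2) / (n : ℝ))) :
    ∀ s : ℝ, 0 < s →
      (s ^ (p + 1) / (p + 1) + s ^ (q + 1) / (q + 1)) *
          (p * s ^ (p - 1) + q * s ^ (q - 1)) / (s ^ p + s ^ q) ^ 2 ≤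
        ((n : ℝ) + 2) / (2 * (n : ℝ)) := by
  intro s hs
  have hN : (2:ℝ) ≤ (n:ℝ) := by exact_mod_cast hn
  have ha : 0 < s ^ p := Real.rpow_pos_of_pos hs p
  have hb : 0 < s ^ q := Real.rpow_pos_of_pos hs q
  have hp1 : (0:ℝ) < p + 1 := by linarith
  have hq1 : (0:ℝ) < q + 1 := by linarith
  have e1 : s ^ (p + 1) = s ^ p * s := by rw [Real.rpow_add hs, Real.rpow_one]
  have e2 : s ^ (q + 1) = s ^ q * s := by rw [Real.rpow_add hs, Real.rpow_one]
  have e3 : s ^ (p - 1) = s ^ p / s := by rw [Real.rpow_sub hs, Real.rpow_one]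
  have e4 : s ^ (q - 1) = s ^ q / s := by rw [Real.rpow_sub hs, Real.rpow_one]
  rw [e1, e2, e3, e4]
  have hnum : (s ^ p * s / (p + 1) + s ^ q * s / (q + 1)) *
      (p * (s ^ p / s) + q * (s ^ q / s)) =
      (s ^ p / (p + 1) + s ^ q / (q + 1)) * (p * s ^ p + q * s ^ q) := by
    field_simp
  rw [hnum, div_le_iff₀ (by positivity)]
  have := g_le_bound_key p q (n:ℝ) (s ^ p) (s ^ q) hp hq hqp hN ha hb hcond
  linarith
end

section
/- Let p > q > 0 be real numbers, f(s) = s^p − s^q and F(s) = s^{p+1}/(p+1) − s^{q+1}/(q+1). Then for every s > 1 (where f(s) > 0): if p ≥ q + 1, the derivative at s of the function s ↦ F(s)/f(s) is ≥ 1/(p+1); and if q < p < q + 1, this derivative is ≥ (1/(p+1))·(1 − (q+1−p)²/(4(q+1))). -/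
/-!
Write `A = s^p`, `B = s^q`. Since `F' = f` and `s f'(s) = pA - qB`, the quotient rule gives
`(F/f)'(s) = 1 - (A/(p+1) - B/(q+1))(pA - qB)/(A - B)²`, a rational function of `A` and `B`.
Clearing denominators, its excess over `1/(p+1)` is `(p-q)((p-q-1)AB + B²)` and its excess over
`(1/(p+1))(1 - (q+1-p)²/(4(q+1)))` is the perfect square `((q+1-p)A - (p+1-q)B)²/4`, both
divided by `(A-B)²(p+1)(q+1) > 0`.
-/

noncomputable def ratioDeriv (p q A B : ℝ) : ℝ :=
  1 - (A / (p + 1) - B / (q + 1)) * (p * A - q * B) / (A - B) ^ 2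

lemma one_div_le_ratioDeriv {p q A B : ℝ} (hq : -1 < q) (hqp : q + 1 ≤ p)
    (hA : 0 ≤ A) (hB : 0 ≤ B) (hAB : A ≠ B) : 1 / (p + 1) ≤ ratioDeriv p q A B := by
  have hp1 : 0 < p + 1 := by linarith
  have hq1 : 0 < q + 1 := by linarith
  have hAB' : A - B ≠ 0 := sub_ne_zero.mpr hAB
  have excess : ratioDeriv p q A B - 1 / (p + 1) =
      (p - q) * ((p - q - 1) * (A * B) + B ^ 2) / ((A - B) ^ 2 * (p + 1) * (q + 1)) := by
    unfold ratioDeriv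
    field_simp
    ring
  have hnum : 0 ≤ (p - q - 1) * (A * B) + B ^ 2 :=
    add_nonneg (mul_nonneg (by linarith) (mul_nonneg hA hB)) (sq_nonneg B)
  rw [← sub_nonneg, excess]
  exact div_nonneg (mul_nonneg (by linarith) hnum) (by positivity)

lemma bound_le_ratioDeriv {p q A B : ℝ} (hp : -1 < p) (hq : -1 < q) (hAB : A ≠ B) :
    1 / (p + 1) * (1 - (q + 1 - p) ^ 2 / (4 * (q + 1))) ≤ ratioDeriv p q A B := by
  have hp1 : 0 < p + 1 := by linarith
  have hq1 : 0 < q + 1 := by linarith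
  have hAB' : A - B ≠ 0 := sub_ne_zero.mpr hAB
  have excess : ratioDeriv p q A B - 1 / (p + 1) * (1 - (q + 1 - p) ^ 2 / (4 * (q + 1))) =
      ((q + 1 - p) * A - (p + 1 - q) * B) ^ 2 / (4 * ((A - B) ^ 2 * (p + 1) * (q + 1))) := by
    unfold ratioDeriv
    field_simp
    ring
  rw [← sub_nonneg, excess]
  positivity

lemma hasDerivAt_rpow_add_one_div {p s : ℝ} (hp : p ≠ -1) (hs : s ≠ 0) :
    HasDerivAt (fun t : ℝ => t ^ (p + 1) / (p + 1)) (s ^ p) s := by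
  have hp1 : p + 1 ≠ 0 := fun h => hp (by linarith)
  have h := (Real.hasDerivAt_rpow_const (p := p + 1) (Or.inl hs)).div_const (p + 1)
  rwa [add_sub_cancel_right, mul_div_cancel_left₀ _ hp1] at h

lemma hasDerivAt_ratio {p q s : ℝ} (hp : p ≠ -1) (hq : q ≠ -1) (hs : s ≠ 0)
    (hf : s ^ p ≠ s ^ q) :
    HasDerivAt (fun t : ℝ => (t ^ (p + 1) / (p + 1) - t ^ (q + 1) / (q + 1)) / (t ^ p - t ^ q))
      (ratioDeriv p q (s ^ p) (s ^ q)) s := by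
  have hF : HasDerivAt (fun t : ℝ => t ^ (p + 1) / (p + 1) - t ^ (q + 1) / (q + 1))
      (s ^ p - s ^ q) s :=
    (hasDerivAt_rpow_add_one_div hp hs).sub (hasDerivAt_rpow_add_one_div hq hs)
  have hf' : HasDerivAt (fun t : ℝ => t ^ p - t ^ q) (p * s ^ (p - 1) - q * s ^ (q - 1)) s :=
    (Real.hasDerivAt_rpow_const (Or.inl hs)).sub (Real.hasDerivAt_rpow_const (Or.inl hs))
  refine (hF.div hf' (sub_ne_zero.mpr hf)).congr_deriv ?_
  have hp1 : p + 1 ≠ 0 := fun h => hp (by linarith)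
  have hq1 : q + 1 ≠ 0 := fun h => hq (by linarith)
  have hf0 : s ^ p - s ^ q ≠ 0 := sub_ne_zero.mpr hf
  simp only [ratioDeriv, Real.rpow_add_one hs, Real.rpow_sub_one hs]
  field_simp

/-- For `p > q > 0`, `f(s) = s^p - s^q`, `F(s) = s^{p+1}/(p+1) - s^{q+1}/(q+1)` and `s > 1`:
if `p ≥ q + 1` the derivative of `s ↦ F(s)/f(s)` at `s` is `≥ 1/(p+1)`, while if
`q < p < q + 1` it is `≥ (1/(p+1))(1 - (q+1-p)²/(4(q+1)))`. -/
theorem deriv_F_div_f_lower_bound (p q : ℝ) (hq : 0 < q) (hqp : q < p) :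
    ∀ s : ℝ, 1 < s →
      (q + 1 ≤ p → ∃ d : ℝ, 1 / (p + 1) ≤ d ∧
        HasDerivAt
          (fun t : ℝ => (t ^ (p + 1) / (p + 1) - t ^ (q + 1) / (q + 1)) / (t ^ p - t ^ q))
          d s) ∧
      (p < q + 1 → ∃ d : ℝ, 1 / (p + 1) * (1 - (q + 1 - p) ^ 2 / (4 * (q + 1))) ≤ d ∧
        HasDerivAt
          (fun t : ℝ => (t ^ (p + 1) / (p + 1) - t ^ (q + 1) / (q + 1)) / (t ^ p - t ^ q))
          d s) := by
  intro s hs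
  have hs0 : 0 < s := one_pos.trans hs
  have hf : s ^ p ≠ s ^ q := ((Real.rpow_lt_rpow_left_iff hs).mpr hqp).ne'
  have hderiv := hasDerivAt_ratio (by linarith) (by linarith) hs0.ne' hf
  exact ⟨fun hle => ⟨_, one_div_le_ratioDeriv (by linarith) hle (by positivity) (by positivity) hf,
      hderiv⟩,
    fun _ => ⟨_, bound_le_ratioDeriv (by linarith) (by linarith) hf, hderiv⟩⟩
end
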